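/- arXiv:1105.3315 — 3 statements merged into one kernel-verified Lean document; each statement's English description precedes it below -/
import Mathlib

section
/- Let L(x,y,z) be the 3×3 matrix with rows (x,z,y),(z,y,x),(y,x,z) and M the constant matrix (1/2)·[[0,−1,1],[1,0,−1],[−1,1,0]]. If (x,y,z) solves the system x' = y−z, y' = z−x, z' = x−y, then d/dt L(x(t),y(t),z(t)) = M·L − L·M. -/
/-- Lax pair for the "solid body" flow x' = y−z, y' = z−x, z' = x−y:
entrywise, d/dt L(x,y,z) = ML − LM. -/
theorem stmt3 (x y z : ℝ → ℝ)
    (hx : Differentiable ℝ x) (hy : Differentiable ℝ y) (hz : Differentiable ℝ z)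
    (hx' : ∀ t, deriv x t = y t - z t)
    (hy' : ∀ t, deriv y t = z t - x t)
    (hz' : ∀ t, deriv z t = x t - y t)
    (L : ℝ → ℝ → ℝ → Matrix (Fin 3) (Fin 3) ℝ)
    (hL : L = fun a b c => !![a, c, b; c, b, a; b, a, c])
    (M : Matrix (Fin 3) (Fin 3) ℝ)
    (hM : M = (1 / 2 : ℝ) • !![0, -1, 1; 1, 0, -1; -1, 1, 0]) :
    ∀ (t : ℝ) (i j : Fin 3),
      deriv (fun s => L (x s) (y s) (z s) i j) t
        = (M * L (x t) (y t) (z t) - L (x t) (y t) (z t) * M) i j := by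
  subst hL hM
  intro t i j
  fin_cases i <;> fin_cases j <;>
    simp [Matrix.mul_apply, Fin.sum_univ_three, Matrix.sub_apply, hx', hy', hz'] <;> ring
end

section
/- If a smooth curve t ↦ L(t) of n×n real matrices satisfies L'(t) = M(t)·L(t) − L(t)·M(t) for some matrix-valued function M, then for every natural number k the function t ↦ trace(L(t)^k) is constant. -/
/-!
By the noncommutative power rule, `d/dt τ(L^k) = ∑ τ(L^p [M, L] L^q)` for any linear functional `τ`.
When `τ` is cyclic, as the trace is, each term equals `τ(L^(p+q) M L) - τ(L^(p+q+1) M) = 0`.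
-/

section CyclicFunctional

variable {A B F : Type*} [Ring A] [AddCommGroup B] [FunLike F A B] [AddMonoidHomClass F A B]

theorem map_pow_mul_commutator_mul_pow_eq_zero (τ : F) (hτ : ∀ a b, τ (a * b) = τ (b * a))
    (a m : A) (p q : ℕ) : τ (a ^ p * (m * a - a * m) * a ^ q) = 0 := by
  rw [hτ, ← mul_assoc, ← pow_add, mul_sub, map_sub, ← mul_assoc, hτ _ a, ← mul_assoc,
    ← pow_succ', ← mul_assoc, ← pow_succ, sub_self]

end CyclicFunctional

theorem HasDerivAt.hasDerivAt_map_pow_of_commutator {𝕜 𝔸 E : Type*} [NontriviallyNormedField 𝕜]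
    [NormedRing 𝔸] [NormedAlgebra 𝕜 𝔸] [NormedAddCommGroup E] [NormedSpace 𝕜 E]
    (τ : 𝔸 →L[𝕜] E) (hτ : ∀ a b, τ (a * b) = τ (b * a)) {L : 𝕜 → 𝔸} {m : 𝔸} {t : 𝕜}
    (hL : HasDerivAt L (m * L t - L t * m) t) (k : ℕ) :
    HasDerivAt (fun s => τ (L s ^ k)) 0 t := by
  have h := τ.hasFDerivAt.comp_hasDerivAt t (hL.fun_pow' k)
  rwa [Function.comp_def, map_sum, Finset.sum_eq_zero
    fun i _ => map_pow_mul_commutator_mul_pow_eq_zero τ hτ _ _ _ _] at h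

namespace Matrix

variable {m n 𝕜 E : Type*} [Fintype m] [Fintype n] [NontriviallyNormedField 𝕜]

/- `HasDerivAt` depends only on the topology of `Matrix m n E`, so a proof may pick any norm
inducing it: the entrywise sup norm here, the submultiplicative `L∞` operator norm below. -/
theorem hasDerivAt_iff_forall_hasDerivAt_apply [NormedAddCommGroup E] [NormedSpace 𝕜 E]
    {L : 𝕜 → Matrix m n E} {L' : Matrix m n E} {t : 𝕜} :
    HasDerivAt L L' t ↔ ∀ i j, HasDerivAt (fun s => L s i j) (L' i j) t := by
  let : NormedAddCommGroup (Matrix m n E) := Matrix.normedAddCommGroup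
  let : NormedSpace 𝕜 (Matrix m n E) := Matrix.normedSpace
  exact hasDerivAt_pi.trans (forall_congr' fun _ => hasDerivAt_pi)

theorem hasDerivAt_trace_pow_of_commutator [DecidableEq m] {L M : 𝕜 → Matrix m m 𝕜} {t : 𝕜}
    (hL : HasDerivAt L (M t * L t - L t * M t) t) (k : ℕ) :
    HasDerivAt (fun s => (L s ^ k).trace) 0 t :=
  letI : NormedRing (Matrix m m 𝕜) := Matrix.linftyOpNormedRing
  letI : NormedAlgebra 𝕜 (Matrix m m 𝕜) := Matrix.linftyOpNormedAlgebra
  hL.hasDerivAt_map_pow_of_commutator ⟨traceLinearMap m 𝕜 𝕜, continuous_id.matrix_trace⟩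
    trace_mul_comm k

end Matrix

theorem stmt4_general {n : ℕ} (L M : ℝ → Matrix (Fin n) (Fin n) ℝ)
    (hL : ∀ i j, Differentiable ℝ (fun t => L t i j))
    (hLax : ∀ (t : ℝ) (i j : Fin n),
      deriv (fun s => L s i j) t = (M t * L t - L t * M t) i j) :
    ∀ (k : ℕ) (t s : ℝ), (L t ^ k).trace = (L s ^ k).trace := by
  intro k t s
  have hL' (t : ℝ) : HasDerivAt L (M t * L t - L t * M t) t :=
    Matrix.hasDerivAt_iff_forall_hasDerivAt_apply.2 fun i j => hLax t i j ▸ (hL i j t).hasDerivAt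
  have htrace (t : ℝ) := Matrix.hasDerivAt_trace_pow_of_commutator (hL' t) k
  exact is_const_of_deriv_eq_zero (fun x => (htrace x).differentiableAt)
    (fun x => (htrace x).deriv) t s

/-- If L'(t) = M(t)L(t) − L(t)M(t), then every trace(L(t)^k) is constant. -/
theorem stmt4 {n : ℕ} (L M : ℝ → Matrix (Fin n) (Fin n) ℝ)
    (hL : ∀ i j, Differentiable ℝ (fun t => L t i j))
    (hM : ∀ i j, Continuous (fun t => M t i j))
    (hLax : ∀ (t : ℝ) (i j : Fin n),
      deriv (fun s => L s i j) t = (M t * L t - L t * M t) i j) :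
    ∀ (k : ℕ) (t s : ℝ), (L t ^ k).trace = (L s ^ k).trace :=
  stmt4_general L M hL hLax
end

section
/- Let I₁(x,y,z) = xz − y²/2 − x³/3 and I₂(x,y,z) = x²/2 − z. Then ∇I₁ × ∇I₂ = (y, z, xy), the Ishii flow vector field; hence the Ishii flow is a Nambu system with Hamiltonians I₁, I₂. -/
/-- Partial derivative in the first variable. -/
noncomputable def pd1 (f : ℝ → ℝ → ℝ → ℝ) (x y z : ℝ) : ℝ := deriv (fun t => f t y z) x
/-- Partial derivative in the second variable. -/
noncomputable def pd2 (f : ℝ → ℝ → ℝ → ℝ) (x y z : ℝ) : ℝ := deriv (fun t => f x t z) y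
/-- Partial derivative in the third variable. -/
noncomputable def pd3 (f : ℝ → ℝ → ℝ → ℝ) (x y z : ℝ) : ℝ := deriv (fun t => f x y t) z
/-- Gradient in ℝ³. -/
noncomputable def grad (f : ℝ → ℝ → ℝ → ℝ) (x y z : ℝ) : ℝ × ℝ × ℝ :=
  (pd1 f x y z, pd2 f x y z, pd3 f x y z)
/-- Cross product in ℝ³. -/
def cross (a b : ℝ × ℝ × ℝ) : ℝ × ℝ × ℝ :=
  (a.2.1 * b.2.2 - a.2.2 * b.2.1, a.2.2 * b.1 - a.1 * b.2.2, a.1 * b.2.1 - a.2.1 * b.1)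
/-- Dot product in ℝ³. -/
def dot (a b : ℝ × ℝ × ℝ) : ℝ := a.1 * b.1 + a.2.1 * b.2.1 + a.2.2 * b.2.2
/-- Curl of a vector field (h₁,h₂,h₃) on ℝ³. -/
noncomputable def curl3 (h₁ h₂ h₃ : ℝ → ℝ → ℝ → ℝ) (x y z : ℝ) : ℝ × ℝ × ℝ :=
  (pd2 h₃ x y z - pd3 h₂ x y z, pd3 h₁ x y z - pd1 h₃ x y z, pd1 h₂ x y z - pd2 h₁ x y z)
/-- Divergence of a vector field on ℝ³. -/
noncomputable def div3 (X₁ X₂ X₃ : ℝ → ℝ → ℝ → ℝ) (x y z : ℝ) : ℝ :=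
  pd1 X₁ x y z + pd2 X₂ x y z + pd3 X₃ x y z
/-- Nambu bracket {H,F,G} = ∇H · (∇F × ∇G). -/
noncomputable def nambu (H F G : ℝ → ℝ → ℝ → ℝ) (x y z : ℝ) : ℝ :=
  dot (grad H x y z) (cross (grad F x y z) (grad G x y z))

theorem grad_eq_of_hasDerivAt {f : ℝ → ℝ → ℝ → ℝ} {x y z a b c : ℝ}
    (h₁ : HasDerivAt (fun t => f t y z) a x) (h₂ : HasDerivAt (fun t => f x t z) b y)
    (h₃ : HasDerivAt (fun t => f x y t) c z) : grad f x y z = (a, b, c) := by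
  simp only [grad, pd1, pd2, pd3, h₁.deriv, h₂.deriv, h₃.deriv]

theorem grad_ishii_I₁ (x y z : ℝ) :
    grad (fun a b c => a * c - b ^ 2 / 2 - a ^ 3 / 3) x y z = (z - x ^ 2, -y, x) := by
  refine grad_eq_of_hasDerivAt ?_ ?_ ?_
  · refine ((((hasDerivAt_id x).mul_const z).sub_const (y ^ 2 / 2)).sub
      ((hasDerivAt_pow 3 x).div_const 3)).congr_deriv ?_
    norm_num
  · refine ((((hasDerivAt_pow 2 y).div_const 2).const_sub (x * z)).sub_const
      (x ^ 3 / 3)).congr_deriv ?_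
    norm_num
  · simpa using (((hasDerivAt_id z).const_mul x).sub_const (y ^ 2 / 2)).sub_const (x ^ 3 / 3)

theorem grad_ishii_I₂ (x y z : ℝ) : grad (fun a _ c => a ^ 2 / 2 - c) x y z = (x, 0, -1) := by
  simp [grad, pd1, pd2, pd3]

/-- For I₁ = xz − y²/2 − x³/3 and I₂ = x²/2 − z, we have
∇I₁ × ∇I₂ = (y, z, xy), the Ishii flow vector field. -/
theorem stmt19 :
    ∀ x y z : ℝ,
      cross (grad (fun a b c => a * c - b ^ 2 / 2 - a ^ 3 / 3) x y z)
            (grad (fun a b c => a ^ 2 / 2 - c) x y z) = (y, z, x * y) := by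
  intro x y z
  rw [grad_ishii_I₁, grad_ishii_I₂]
  simp only [cross, Prod.mk.injEq]
  refine ⟨?_, ?_, ?_⟩ <;> ring
end
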